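/- arXiv:2005.02913 — 4 statements merged into one kernel-verified Lean document; each statement's English description precedes it below -/
import Mathlib

section
/- Let G be a graph with a perfect matching M. If M contains an edge cut of G of odd cardinality, then there is no perfect matching N of G such that M ∪ N forms a Hamiltonian cycle of G. -/
open SimpleGraph

/-- The cycle graph on `ZMod n`: consecutive elements are adjacent. -/
def cycGraph (n : ℕ) : SimpleGraph (ZMod n) where
  Adj u v := u ≠ v ∧ (u = v + 1 ∨ v = u + 1)
  symm := ⟨fun _ _ h => ⟨h.1.symm, h.2.symm⟩⟩
  loopless := ⟨fun _ h => h.1 rfl⟩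

/-- The edge set of a closed walk, as a set. -/
def walkEdgeSet {V : Type*} {G : SimpleGraph V} {v : V} (c : G.Walk v v) : Set (Sym2 V) :=
  {e | e ∈ c.edges}

/-- The perfect matching `M` extends to a Hamiltonian cycle of `G`: there is a perfect
matching `N` of `G` such that `M ∪ N` is the edge set of a Hamiltonian cycle of `G`. -/
def ExtendsToHamCycle {V : Type*} [DecidableEq V] (G : SimpleGraph V) (M : G.Subgraph) : Prop :=
  ∃ N : G.Subgraph, N.IsPerfectMatching ∧
    ∃ (v : V) (c : G.Walk v v), c.IsHamiltonianCycle ∧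
      walkEdgeSet c = M.edgeSet ∪ N.edgeSet

/-- The PMH-property: `G` has a perfect matching and every perfect matching of `G`
extends to a Hamiltonian cycle of `G`. -/
def HasPMH {V : Type*} [DecidableEq V] (G : SimpleGraph V) : Prop :=
  (∃ M : G.Subgraph, M.IsPerfectMatching) ∧
    ∀ M : G.Subgraph, M.IsPerfectMatching → ExtendsToHamCycle G M

/-- `X` is an edge cut of `G`: the set of edges of `G` with exactly one endpoint in `S`,
for some nonempty proper subset `S` of the vertices. -/
def IsEdgeCut {V : Type*} (G : SimpleGraph V) (X : Set (Sym2 V)) : Prop :=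
  ∃ S : Set V, S.Nonempty ∧ S ≠ Set.univ ∧
    X = {e | e ∈ G.edgeSet ∧ ∃ u v, e = s(u, v) ∧ u ∈ S ∧ v ∉ S}

/-! A closed walk leaves a vertex set `S` as often as it enters it, so it traverses the edges
between `S` and its complement an even number of times in total. A Hamiltonian cycle is a
trail, so if the cut `X` determined by `S` lies in `M ∪ N`, each edge of `X` is traversed exactly
once and `|X|` is even. -/

def CrossesCut {V : Type*} (S : Set V) (e : Sym2 V) : Prop :=
  ∃ u v, e = s(u, v) ∧ u ∈ S ∧ v ∉ S

theorem crossesCut_mk_iff {V : Type*} (S : Set V) (u v : V) :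
    CrossesCut S s(u, v) ↔ ¬(u ∈ S ↔ v ∈ S) := by
  constructor
  · rintro ⟨a, b, hab, ha, hb⟩
    rcases Sym2.eq_iff.mp hab with ⟨rfl, rfl⟩ | ⟨rfl, rfl⟩ <;> tauto
  · intro h
    by_cases hu : u ∈ S
    · exact ⟨u, v, rfl, hu, by tauto⟩
    · exact ⟨v, u, Sym2.eq_swap, by tauto, hu⟩

namespace SimpleGraph

open Classical in
theorem Walk.even_countP_crossesCut_iff {V : Type*} {G : SimpleGraph V} (S : Set V) {u v : V}
    (p : G.Walk u v) : Even (p.edges.countP (CrossesCut S ·)) ↔ (u ∈ S ↔ v ∈ S) := by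
  induction p with
  | nil => simp
  | @cons u w v h p ih =>
    rw [Walk.edges_cons, List.countP_cons]
    by_cases hu : u ∈ S <;> by_cases hw : w ∈ S <;>
      simp [crossesCut_mk_iff, hu, hw, Nat.even_add_one, ih]

open Classical in
theorem Walk.IsTrail.even_ncard_crossesCut {V : Type*} {G : SimpleGraph V} (S : Set V) {v : V}
    {c : G.Walk v v} (hc : c.IsTrail) : Even {e | e ∈ c.edges ∧ CrossesCut S e}.ncard := by
  have hfilter : {e | e ∈ c.edges ∧ CrossesCut S e} =
      ↑(c.edges.filter (CrossesCut S ·)).toFinset := by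
    ext e
    simp
  rw [hfilter, Set.ncard_coe_finset, List.toFinset_card_of_nodup (hc.edges_nodup.filter _),
    ← List.countP_eq_length_filter]
  exact (c.even_countP_crossesCut_iff S).mpr Iff.rfl

end SimpleGraph

theorem IsEdgeCut.even_ncard_of_subset_walkEdgeSet {V : Type*} {G : SimpleGraph V}
    {X : Set (Sym2 V)} (hX : IsEdgeCut G X) {v : V} {c : G.Walk v v} (hc : c.IsTrail)
    (hXc : X ⊆ walkEdgeSet c) : Even X.ncard := by
  obtain ⟨S, -, -, rfl⟩ := hX
  convert hc.even_ncard_crossesCut S using 2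
  ext e
  exact ⟨fun he => ⟨hXc he, he.2⟩, fun ⟨hec, hcross⟩ => ⟨c.edges_subset_edgeSet hec, hcross⟩⟩

theorem stmt_3_general {V : Type*} [DecidableEq V] (G : SimpleGraph V)
    (M : G.Subgraph)
    (X : Set (Sym2 V)) (hX : IsEdgeCut G X) (hXM : X ⊆ M.edgeSet)
    (hodd : Odd X.ncard) :
    ¬ ExtendsToHamCycle G M := by
  rintro ⟨N, -, v, c, hc, hcM⟩
  have hXc : X ⊆ walkEdgeSet c := hcM ▸ hXM.trans Set.subset_union_left
  exact Nat.not_even_iff_odd.mpr hodd (hX.even_ncard_of_subset_walkEdgeSet hc.isCycle.isTrail hXc)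

/-- If a perfect matching `M` of `G` contains an edge cut of odd cardinality, then `M`
cannot be extended to a Hamiltonian cycle of `G`. -/
theorem stmt_3 {V : Type*} [DecidableEq V] (G : SimpleGraph V)
    (M : G.Subgraph) (hM : M.IsPerfectMatching)
    (X : Set (Sym2 V)) (hX : IsEdgeCut G X) (hXM : X ⊆ M.edgeSet)
    (hodd : Odd X.ncard) :
    ¬ ExtendsToHamCycle G M :=
  stmt_3_general G M X hX hXM hodd
end

section
/- For every p ≥ 3 and q ≥ 3, the graph C_p □ P_q does not have the PMH-property; that is, there exists a perfect matching of C_p □ P_q (when one exists at all) that cannot be extended to a Hamiltonian cycle, or C_p □ P_q has no perfect matching. -/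
open SimpleGraph

/-!
If `p` and `q` are both odd, `C_p □ P_q` has no perfect matching. If `p` is odd and `q` is even,
take the vertical matching `M` pairing layers `2k` and `2k + 1`: any perfect matching `N`
edge-disjoint from `M` matches the bottom layer within itself, i.e. restricts to a perfect
matching of the odd cycle `C_p`.

If `p` is even, pair `2k` with `2k + 1` on the bottom layer and `2k - 1` with `2k` on all other
layers, and suppose `M ∪ N` is a Hamiltonian cycle. Where `M` does not join `(i, j)` to
`(i + 1, j)`, the `N`-edges at these two vertices either join them or are both vertical. Reading
the columns `i`, `i + 1` from the top layer down, this forces `N` to match `(i, 0)` upwards iff it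
matches `(i + 1, 0)` upwards: on the bottom layer for odd `i`, on the upper layers for even `i`.
Hence `N` matches either no bottom vertex or every bottom vertex upwards, and then the bottom
layer, resp. the bottom two layers, is a proper set of vertices closed under `M` and `N`,
contradicting connectedness of the Hamiltonian cycle.
-/

open Function

namespace SimpleGraph

variable {V : Type*} {G : SimpleGraph V}

def matchingOfInvolutive (f : V → V) (hf : Involutive f) (hadj : ∀ v, G.Adj v (f v)) :
    G.Subgraph where
  verts := Set.univ
  Adj v w := w = f v
  adj_sub := by rintro v _ rfl; exact hadj v
  edge_vert _ := Set.mem_univ _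
  symm := ⟨fun v w h => by rw [h, hf v]⟩

lemma isPerfectMatching_matchingOfInvolutive {f : V → V} (hf : Involutive f)
    (hadj : ∀ v, G.Adj v (f v)) : (matchingOfInvolutive f hf hadj).IsPerfectMatching :=
  Subgraph.isPerfectMatching_iff.2 fun v => ⟨f v, rfl, fun _ h => h⟩

lemma Subgraph.IsPerfectMatching.exists_adj_iff_eq {N : G.Subgraph} (hN : N.IsPerfectMatching) :
    ∃ n : V → V, ∀ v w, N.Adj v w ↔ w = n v := by
  choose n hn using Subgraph.isPerfectMatching_iff.1 hN
  exact ⟨n, fun v w => ⟨(hn v).2 w, fun h => h ▸ (hn v).1⟩⟩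

lemma Walk.IsCycle.exists_ne_mem_edges {u v : V} {c : G.Walk u u} (hc : c.IsCycle)
    (hv : v ∈ c.support) : ∃ a b, a ≠ b ∧ s(v, a) ∈ c.edges ∧ s(v, b) ∈ c.edges := by
  obtain ⟨a, b, hab, h⟩ := Set.ncard_eq_two.mp (hc.ncard_neighborSet_toSubgraph_eq_two hv)
  have hmem : ∀ w ∈ c.toSubgraph.neighborSet v, s(v, w) ∈ c.edges := fun w hw =>
    Walk.adj_toSubgraph_iff_mem_edges.mp hw
  exact ⟨a, b, hab, hmem a (by simp [h]), hmem b (by simp [h])⟩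

lemma Walk.exists_mem_edges_of_mem_support [DecidableEq V] {u v x y : V} (c : G.Walk u v)
    (hx : x ∈ c.support) (hy : y ∈ c.support) {S : Set V} (hxS : x ∈ S) (hyS : y ∉ S) :
    ∃ a ∈ S, ∃ b ∉ S, s(a, b) ∈ c.edges := by
  obtain ⟨d, hd, ha, hb⟩ :=
    ((c.takeUntil x hx).reverse.append (c.takeUntil y hy)).exists_boundary_dart S hxS hyS
  refine ⟨d.fst, ha, d.snd, hb, ?_⟩
  have hd' : d.edge ∈ ((c.takeUntil x hx).reverse.append (c.takeUntil y hy)).edges :=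
    List.mem_map_of_mem hd
  rw [Walk.edges_append, Walk.edges_reverse, List.mem_append, List.mem_reverse] at hd'
  rcases hd' with h | h
  · exact c.edges_takeUntil_subset_edges hx h
  · exact c.edges_takeUntil_subset_edges hy h

end SimpleGraph

/-- What the proof uses of a perfect matching `N`, given by its partner map `n`, such that `M ∪ N`
is a Hamiltonian cycle, where `M` is the perfect matching with partner map `f`. -/
structure IsHamiltonianMate {V : Type*} (G : SimpleGraph V) (f n : V → V) : Prop where
  adj : ∀ v, G.Adj v (n v)
  involutive : Involutive n
  ne : ∀ v, n v ≠ f v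
  eq_univ : ∀ S : Set V, S.Nonempty → (∀ v ∈ S, f v ∈ S) → (∀ v ∈ S, n v ∈ S) → S = Set.univ

lemma ExtendsToHamCycle.exists_isHamiltonianMate {V : Type*} [DecidableEq V] {G : SimpleGraph V}
    {f : V → V} {hf : Involutive f} {hadj : ∀ v, G.Adj v (f v)}
    (h : ExtendsToHamCycle G (matchingOfInvolutive f hf hadj)) : ∃ n, IsHamiltonianMate G f n := by
  obtain ⟨N, hN, u, c, hc, hE⟩ := h
  obtain ⟨n, hn⟩ := hN.exists_adj_iff_eq
  have hedge : ∀ {a b}, s(a, b) ∈ c.edges → b = f a ∨ b = n a := fun {a b} hab => by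
    have : s(a, b) ∈ walkEdgeSet c := hab
    rw [hE] at this
    exact this.imp id (hn a b).1
  refine ⟨n, ⟨fun v => N.adj_sub ((hn v _).2 rfl), fun v => ?_, fun v hv => ?_,
    fun S ⟨x, hx⟩ hfS hnS => ?_⟩⟩
  · exact ((hn _ _).1 (N.adj_symm ((hn v _).2 rfl))).symm
  · -- `v` has two distinct neighbours on the cycle, but both would be `f v`.
    obtain ⟨a, b, hab, ha, hb⟩ := hc.isCycle.exists_ne_mem_edges (hc.mem_support v)
    have hunique : ∀ {w}, s(v, w) ∈ c.edges → w = f v := fun hw =>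
      (hedge hw).elim id fun h => h.trans hv
    exact hab ((hunique ha).trans (hunique hb).symm)
  · by_contra hS
    obtain ⟨y, hy⟩ := (Set.ne_univ_iff_exists_notMem S).mp hS
    obtain ⟨a, ha, b, hb, hab⟩ :=
      c.exists_mem_edges_of_mem_support (hc.mem_support x) (hc.mem_support y) hx hy
    rcases hedge hab with rfl | rfl
    exacts [hb (hfS a ha), hb (hnS a ha)]

namespace ZMod

lemma apply_eq_apply_zero_of_forall_add_one {p : ℕ} {α : Sort*} {g : ZMod p → α}
    (h : ∀ i, g (i + 1) = g i) (i : ZMod p) : g i = g 0 := by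
  rw [← intCast_zmod_cast i]
  induction (cast i : ℤ) using Int.induction_on with
  | zero => rw [Int.cast_zero]
  | succ k ih => rw [Int.cast_add, Int.cast_one, h, ih]
  | pred k ih => rw [← ih, ← h, Int.cast_sub, Int.cast_one, sub_add_cancel]

end ZMod

section Cylinder

variable {p q : ℕ}

lemma cycGraph_adj_add_one [Nontrivial (ZMod p)] (i : ZMod p) : (cycGraph p).Adj i (i + 1) :=
  ⟨fun h => one_ne_zero (left_eq_add.mp h), Or.inr rfl⟩

lemma cycGraph_adj_sub_one [Nontrivial (ZMod p)] (i : ZMod p) : (cycGraph p).Adj i (i - 1) := by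
  have h := (cycGraph_adj_add_one (i - 1)).symm
  rwa [sub_add_cancel] at h

lemma cylinder_adj_cases {i : ZMod p} {j : Fin q} {w : ZMod p × Fin q}
    (h : (cycGraph p □ pathGraph q).Adj (i, j) w) :
    (w.1 ≠ i ∧ w.2 = j ∧ (w.1 = i + 1 ∨ w.1 = i - 1)) ∨
      (w.1 = i ∧ (j.val + 1 = w.2.val ∨ w.2.val + 1 = j.val)) := by
  rcases boxProd_adj.mp h with ⟨⟨hne, hw⟩, hj⟩ | ⟨hw, hi⟩ <;> dsimp only at *
  · refine Or.inl ⟨Ne.symm hne, hj.symm, hw.symm.imp id fun h => ?_⟩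
    rw [h, add_sub_cancel_right]
  · exact Or.inr ⟨hi.symm, pathGraph_adj.mp hw⟩

def cycPair (h2 : 2 ∣ p) (b : ZMod 2) (i : ZMod p) : ZMod p :=
  if ZMod.castHom h2 (ZMod 2) i = b then i + 1 else i - 1

lemma cycPair_of_eq {h2 : 2 ∣ p} {b : ZMod 2} {i : ZMod p}
    (h : ZMod.castHom h2 (ZMod 2) i = b) : cycPair h2 b i = i + 1 := if_pos h

lemma cycPair_of_ne {h2 : 2 ∣ p} {b : ZMod 2} {i : ZMod p}
    (h : ZMod.castHom h2 (ZMod 2) i ≠ b) : cycPair h2 b i = i - 1 := if_neg h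

lemma involutive_cycPair (h2 : 2 ∣ p) (b : ZMod 2) : Involutive (cycPair h2 b) := by
  have hsucc : ∀ c : ZMod 2, c + 1 ≠ c := by decide
  have hpred : ∀ c d : ZMod 2, c ≠ d → c - 1 = d := by decide
  intro i
  by_cases hi : ZMod.castHom h2 (ZMod 2) i = b
  · rw [cycPair_of_eq hi, cycPair_of_ne (by rw [map_add, map_one, hi]; exact hsucc b),
      add_sub_cancel_right]
  · rw [cycPair_of_ne hi, cycPair_of_eq (by rw [map_sub, map_one]; exact hpred _ _ hi),
      sub_add_cancel]

lemma cycGraph_adj_cycPair (h2 : 2 ∣ p) (b : ZMod 2) (i : ZMod p) :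
    (cycGraph p).Adj i (cycPair h2 b i) := by
  have : Nontrivial (ZMod p) := ZMod.nontrivial_iff.mpr (by rintro rfl; omega)
  unfold cycPair
  split_ifs
  exacts [cycGraph_adj_add_one i, cycGraph_adj_sub_one i]

/-- On the bottom layer `j = 0` this pairs `2k` with `2k + 1`, on every other layer `2k - 1`
with `2k`. -/
def horizontalPair (h2 : 2 ∣ p) [NeZero q] (v : ZMod p × Fin q) : ZMod p × Fin q :=
  (cycPair h2 (if v.2 = 0 then 0 else 1) v.1, v.2)

lemma involutive_horizontalPair (h2 : 2 ∣ p) [NeZero q] :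
    Involutive (horizontalPair (q := q) h2) := fun v =>
  Prod.ext (involutive_cycPair h2 _ v.1) rfl

lemma adj_horizontalPair (h2 : 2 ∣ p) [NeZero q] (v : ZMod p × Fin q) :
    (cycGraph p □ pathGraph q).Adj v (horizontalPair h2 v) :=
  boxProd_adj.mpr (Or.inl ⟨cycGraph_adj_cycPair h2 _ v.1, rfl⟩)

def finPair (hq : Even q) (j : Fin q) : Fin q :=
  if h : j.val % 2 = 0 then ⟨j.val + 1, by obtain ⟨r, hr⟩ := hq; omega⟩
  else ⟨j.val - 1, by omega⟩

lemma val_finPair (hq : Even q) (j : Fin q) :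
    (finPair hq j).val = if j.val % 2 = 0 then j.val + 1 else j.val - 1 := by
  unfold finPair; split_ifs <;> rfl

lemma involutive_finPair (hq : Even q) : Involutive (finPair hq) := by
  intro j
  ext
  rw [val_finPair, val_finPair]
  split_ifs <;> omega

lemma pathGraph_adj_finPair (hq : Even q) (j : Fin q) : (pathGraph q).Adj j (finPair hq j) := by
  rw [pathGraph_adj, val_finPair]
  split_ifs <;> omega

def verticalPair (hq : Even q) (v : ZMod p × Fin q) : ZMod p × Fin q :=
  (v.1, finPair hq v.2)

lemma involutive_verticalPair (hq : Even q) : Involutive (verticalPair (p := p) hq) :=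
  fun v => Prod.ext rfl (involutive_finPair hq v.2)

lemma adj_verticalPair (hq : Even q) (v : ZMod p × Fin q) :
    (cycGraph p □ pathGraph q).Adj v (verticalPair hq v) :=
  boxProd_adj.mpr (Or.inr ⟨pathGraph_adj_finPair hq v.2, rfl⟩)

def MateAbove (n : ZMod p × Fin q → ZMod p × Fin q) (i : ZMod p) (j : Fin q) : Prop :=
  (n (i, j)).1 = i ∧ j < (n (i, j)).2

namespace IsHamiltonianMate

variable {f n : ZMod p × Fin q → ZMod p × Fin q}

lemma mateAbove_iff_eq (hn : IsHamiltonianMate (cycGraph p □ pathGraph q) f n)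
    {i : ZMod p} {j j' : Fin q} (hj : j'.val = j.val + 1) :
    MateAbove n i j ↔ n (i, j) = (i, j') := by
  constructor
  · rintro ⟨h1, h2⟩
    rw [Fin.lt_def] at h2
    rcases cylinder_adj_cases (hn.adj (i, j)) with ⟨hne, -⟩ | ⟨-, hv | hv⟩
    · exact absurd h1 hne
    · exact Prod.ext h1 (Fin.ext (by dsimp only; omega))
    · omega
  · intro h
    exact ⟨by rw [h], by rw [h, Fin.lt_def]; dsimp only; omega⟩

lemma mateAbove_iff_of_val_eq_succ (hn : IsHamiltonianMate (cycGraph p □ pathGraph q) f n)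
    {i : ZMod p} {j j' : Fin q} (hj : j'.val = j.val + 1) :
    MateAbove n i j ↔ (n (i, j')).1 = i ∧ ¬ MateAbove n i j' := by
  rw [hn.mateAbove_iff_eq hj, hn.involutive.eq_iff, eq_comm]
  refine ⟨fun h => ⟨by rw [h], fun ⟨_, h2⟩ => ?_⟩, fun ⟨h1, h2⟩ => ?_⟩
  · rw [h, Fin.lt_def] at h2
    dsimp only at h2
    omega
  · rcases cylinder_adj_cases (hn.adj (i, j')) with ⟨hne, -⟩ | ⟨-, hv | hv⟩
    · exact absurd h1 hne
    · exact absurd ⟨h1, Fin.lt_def.mpr (by omega)⟩ h2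
    · exact Prod.ext h1 (Fin.ext (by dsimp only; omega))

lemma mateAbove_iff_of_fst_iff (hn : IsHamiltonianMate (cycGraph p □ pathGraph q) f n)
    {i i' : ZMod p}
    (h : ∀ k : Fin q, k.val ≠ 0 → ((n (i, k)).1 = i ↔ (n (i', k)).1 = i')) (j : Fin q) :
    MateAbove n i j ↔ MateAbove n i' j := by
  obtain ⟨d, hd⟩ : ∃ d, j.val + d + 1 = q := ⟨q - j.val - 1, by omega⟩
  induction d generalizing j with
  | zero =>
    have htop : ∀ i, ¬ MateAbove n i j := fun i ⟨_, hlt⟩ => by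
      have := (n (i, j)).2.isLt
      rw [Fin.lt_def] at hlt
      omega
    exact iff_of_false (htop i) (htop i')
  | succ d ih =>
    let j' : Fin q := ⟨j.val + 1, by omega⟩
    rw [hn.mateAbove_iff_of_val_eq_succ (j' := j') rfl,
      hn.mateAbove_iff_of_val_eq_succ (j' := j') rfl, h j' (by simp [j']),
      ih j' (by simp [j']; omega)]

lemma fst_eq_iff_of_outward (hn : IsHamiltonianMate (cycGraph p □ pathGraph q) f n)
    {i : ZMod p} {j : Fin q} (hf : f (i, j) = (i - 1, j))
    (hf' : f (i + 1, j) = (i + 1 + 1, j)) :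
    (n (i, j)).1 = i ↔ (n (i + 1, j)).1 = i + 1 := by
  have hl : ¬ (n (i, j)).1 = i ↔ n (i, j) = (i + 1, j) := by
    refine ⟨fun hne => ?_, fun h h1 => by
      rw [h] at h1
      exact (hn.adj (i, j)).ne (by rw [h, Prod.mk.injEq]; exact ⟨h1.symm, rfl⟩)⟩
    rcases cylinder_adj_cases (hn.adj (i, j)) with ⟨-, h2, h | h⟩ | ⟨h1, -⟩
    · exact Prod.ext h h2
    · exact (hn.ne (i, j) (by rw [hf]; exact Prod.ext h h2)).elim
    · exact absurd h1 hne
  have hr : ¬ (n (i + 1, j)).1 = i + 1 ↔ n (i + 1, j) = (i, j) := by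
    refine ⟨fun hne => ?_, fun h h1 => by
      rw [h] at h1
      exact (hn.adj (i + 1, j)).ne (by rw [h, Prod.mk.injEq]; exact ⟨h1.symm, rfl⟩)⟩
    rcases cylinder_adj_cases (hn.adj (i + 1, j)) with ⟨-, h2, h | h⟩ | ⟨h1, -⟩
    · exact (hn.ne (i + 1, j) (by rw [hf']; exact Prod.ext h h2)).elim
    · exact Prod.ext (by rw [h, add_sub_cancel_right]) h2
    · exact absurd h1 hne
  rw [← not_iff_not, hl, hr, hn.involutive.eq_iff, eq_comm]

lemma mateAbove_zero_iff [NeZero q] (hn : IsHamiltonianMate (cycGraph p □ pathGraph q) f n)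
    (i : ZMod p) : MateAbove n i 0 ↔ (n (i, 0)).1 = i := by
  refine ⟨And.left, fun h1 => ⟨h1, ?_⟩⟩
  rcases cylinder_adj_cases (hn.adj (i, 0)) with ⟨hne, -⟩ | ⟨-, hv | hv⟩
  · exact absurd h1 hne
  · rw [Fin.lt_def, ← hv]
    exact Nat.lt_add_one _
  · rw [Fin.val_zero] at hv
    omega

lemma mateAbove_add_one_zero [NeZero q] {h2 : 2 ∣ p}
    (hn : IsHamiltonianMate (cycGraph p □ pathGraph q) (horizontalPair h2) n) (i : ZMod p) :
    MateAbove n (i + 1) 0 ↔ MateAbove n i 0 := by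
  set par := ZMod.castHom h2 (ZMod 2)
  have hsucc : par (i + 1) = par i + 1 := by rw [map_add, map_one]
  have hpair : ∀ k : Fin q, par i ≠ (if k = 0 then 0 else 1) →
      par (i + 1) = (if k = 0 then 0 else 1) → ((n (i, k)).1 = i ↔ (n (i + 1, k)).1 = i + 1) :=
    fun k h h' => hn.fst_eq_iff_of_outward
      (congrArg (·, k) (cycPair_of_ne h)) (congrArg (·, k) (cycPair_of_eq h'))
  -- `M` joins columns `i` and `i + 1` only on the bottom layer if `i` is even, and only above
  -- it if `i` is odd; compare the columns where it does not.
  rcases (by decide : ∀ c : ZMod 2, c = 0 ∨ c = 1) (par i) with h | h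
  · refine (hn.mateAbove_iff_of_fst_iff (fun k hk => hpair k ?_ ?_) 0).symm
    · rw [if_neg (Fin.val_ne_iff.mp (by simpa using hk)), h]; decide
    · rw [if_neg (Fin.val_ne_iff.mp (by simpa using hk)), hsucc, h]; decide
  · rw [hn.mateAbove_zero_iff, hn.mateAbove_zero_iff]
    refine (hpair 0 ?_ ?_).symm
    · rw [if_pos rfl, h]; decide
    · rw [if_pos rfl, hsucc, h]; decide

end IsHamiltonianMate

lemma not_isHamiltonianMate_horizontalPair [NeZero q] (h2 : 2 ∣ p) (hq : 3 ≤ q)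
    (n : ZMod p × Fin q → ZMod p × Fin q) :
    ¬ IsHamiltonianMate (cycGraph p □ pathGraph q) (horizontalPair h2) n := by
  intro hn
  have hconst : ∀ i, MateAbove n i 0 = MateAbove n 0 0 :=
    ZMod.apply_eq_apply_zero_of_forall_add_one fun i => propext (hn.mateAbove_add_one_zero i)
  by_cases h0 : MateAbove n 0 0
  · let one : Fin q := ⟨1, by omega⟩
    have hup : ∀ i, n (i, 0) = (i, one) := fun i =>
      (hn.mateAbove_iff_eq (j' := one) rfl).mp (hconst i ▸ h0)
    have huniv := hn.eq_univ {v | v.2.val ≤ 1} ⟨(0, 0), by simp⟩ (fun v hv => hv)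
      (fun v (hv : v.2.val ≤ 1) => ?_)
    · have : ((0 : ZMod p), (⟨2, by omega⟩ : Fin q)) ∈ {v : ZMod p × Fin q | v.2.val ≤ 1} :=
        huniv ▸ Set.mem_univ _
      simp at this
    · obtain ⟨i, j⟩ := v
      obtain rfl | rfl : j = 0 ∨ j = one := by
        rcases Nat.le_one_iff_eq_zero_or_eq_one.mp hv with h | h
        exacts [Or.inl (Fin.ext h), Or.inr (Fin.ext h)]
      · simp [hup, one]
      · simp [← hup i, hn.involutive (i, 0)]
  · have huniv := hn.eq_univ {v | v.2 = 0} ⟨(0, 0), rfl⟩ (fun v hv => hv)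
      (fun v (hv : v.2 = 0) => ?_)
    · have : ((0 : ZMod p), (⟨1, by omega⟩ : Fin q)) ∈ {v : ZMod p × Fin q | v.2 = 0} :=
        huniv ▸ Set.mem_univ _
      exact one_ne_zero (congrArg Fin.val this)
    · obtain ⟨i, j⟩ := v
      subst hv
      have hne : (n (i, 0)).1 ≠ i := fun h => h0 (hconst i ▸ (hn.mateAbove_zero_iff i).mpr h)
      rcases cylinder_adj_cases (hn.adj (i, 0)) with ⟨-, h, -⟩ | ⟨h, -⟩
      exacts [h, absurd h hne]

lemma not_isHamiltonianMate_verticalPair [NeZero p] [NeZero q] (hp : Odd p) (hq : Even q)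
    (n : ZMod p × Fin q → ZMod p × Fin q) :
    ¬ IsHamiltonianMate (cycGraph p □ pathGraph q) (verticalPair hq) n := by
  intro hn
  have hbottom : ∀ i, n (i, 0) = ((n (i, 0)).1, 0) := by
    intro i
    rcases cylinder_adj_cases (hn.adj (i, 0)) with ⟨-, h, -⟩ | ⟨h, hv | hv⟩
    · exact Prod.ext rfl h
    · refine (hn.ne (i, 0) (Prod.ext h (Fin.ext ?_))).elim
      rw [← hv, verticalPair, val_finPair]
      simp
    · simp at hv
  let g i := (n (i, 0)).1
  have hg : Involutive g := fun i => by
    simpa [g, ← hbottom] using congrArg Prod.fst (hn.involutive (i, 0))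
  have hadj : ∀ i, (cycGraph p).Adj i (g i) := fun i => by
    have := hn.adj (i, 0)
    rw [hbottom] at this
    exact (boxProd_adj.mp this).resolve_right (fun h => h.1.ne rfl) |>.1
  have := (isPerfectMatching_matchingOfInvolutive hg hadj).even_card
  rw [ZMod.card] at this
  exact Nat.not_even_iff_odd.mpr hp this

end Cylinder

theorem stmt_6_general (p q : ℕ) (hq : 3 ≤ q) :
    ¬ HasPMH (cycGraph p □ SimpleGraph.pathGraph q) := by
  rintro ⟨⟨M, hM⟩, hext⟩
  have : NeZero q := ⟨by omega⟩
  rcases Nat.even_or_odd p with hp | hp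
  · have h2 := even_iff_two_dvd.mp hp
    obtain ⟨n, hn⟩ := (hext _ (isPerfectMatching_matchingOfInvolutive
      (involutive_horizontalPair h2) (adj_horizontalPair h2))).exists_isHamiltonianMate
    exact not_isHamiltonianMate_horizontalPair h2 hq n hn
  have : NeZero p := ⟨hp.pos.ne'⟩
  rcases Nat.even_or_odd q with hq' | hq'
  · obtain ⟨n, hn⟩ := (hext _ (isPerfectMatching_matchingOfInvolutive
      (involutive_verticalPair hq') (adj_verticalPair hq'))).exists_isHamiltonianMate
    exact not_isHamiltonianMate_verticalPair hp hq' n hn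
  · have := hM.even_card
    rw [Fintype.card_prod, ZMod.card, Fintype.card_fin] at this
    exact Nat.not_even_iff_odd.mpr (hp.mul hq') this

/-- For every `p, q ≥ 3`, the graph `C_p □ P_q` does not have the PMH-property. -/
theorem stmt_6 (p q : ℕ) (hp : 3 ≤ p) (hq : 3 ≤ q) :
    ¬ HasPMH (cycGraph p □ SimpleGraph.pathGraph q) :=
  stmt_6_general p q hq
end

section
/- For p even, p ≥ 4, and q ≥ 3, the perfect matching M of C_p □ P_q consisting of the edges (i,q−1)(i+1,q−1) for every odd i, the edges (i−1,q)(i,q) for every odd i, together with a suitable completion to a perfect matching on the remaining vertices, cannot be extended to a Hamiltonian cycle of C_p □ P_q. -/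
/-!
If `M ∪ N` is a Hamiltonian cycle, no nonempty proper set of vertices is closed under taking
`M`- and `N`-partners; in particular `M` and `N` share no edge. Let `W` be the top row together
with the vertices of the row below that `N` joins vertically to the top row. `W` is closed under
`N`, and `M` matches the top row within itself. `M` also matches the row below within itself,
but with the pairs shifted by one column. So if `(j, sub) ∈ W` is `M`-matched to `(k, sub)`, the
two horizontal neighbours of `(k, top)` are `(j, top)`, already `N`-matched downwards, and the
`M`-partner of `(k, top)`; hence `N` matches `(k, top)` downwards too, and `W` is closed under
`M`. As `W` misses the bottom row, this is a contradiction.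
-/

open SimpleGraph

namespace SimpleGraph

variable {V : Type*} [DecidableEq V] {G : SimpleGraph V}

theorem Walk.mem_of_edges_closed {u w : V} (p : G.Walk u w) {S : Set V}
    (hS : ∀ x y, s(x, y) ∈ p.edges → x ∈ S → y ∈ S) {a b : V} (ha : a ∈ p.support)
    (hb : b ∈ p.support) (haS : a ∈ S) : b ∈ S := by
  by_contra hbS
  let q := (p.takeUntil a ha).reverse.append (p.takeUntil b hb)
  obtain ⟨d, hd, hdS, hdS'⟩ := q.exists_boundary_dart S haS hbS
  have hq : d.edge ∈ q.edges := List.mem_map_of_mem hd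
  have hedge : s(d.fst, d.snd) ∈ p.edges := by
    rw [Walk.edges_append, Walk.edges_reverse, List.mem_append, List.mem_reverse] at hq
    rcases hq with h | h
    · exact p.edges_takeUntil_subset_edges ha h
    · exact p.edges_takeUntil_subset_edges hb h
  exact hdS' (hS _ _ hedge hdS)

variable {v : V} {c : G.Walk v v} {M N : G.Subgraph}

theorem Walk.IsHamiltonianCycle.mem_of_adj_closed (hc : c.IsHamiltonianCycle)
    (hE : walkEdgeSet c = M.edgeSet ∪ N.edgeSet) {S : Set V}
    (hMS : ∀ x y, M.Adj x y → x ∈ S → y ∈ S) (hNS : ∀ x y, N.Adj x y → x ∈ S → y ∈ S)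
    {a : V} (haS : a ∈ S) (b : V) : b ∈ S := by
  refine c.mem_of_edges_closed (fun x y hxy => ?_) (hc.mem_support a) (hc.mem_support b) haS
  have hxy' : s(x, y) ∈ M.edgeSet ∪ N.edgeSet := hE ▸ hxy
  rcases hxy' with h | h
  · exact hMS x y h
  · exact hNS x y h

theorem Walk.IsHamiltonianCycle.eq_or_eq_of_adj_of_adj (hc : c.IsHamiltonianCycle)
    (hE : walkEdgeSet c = M.edgeSet ∪ N.edgeSet) (hM : M.IsMatching) (hN : N.IsMatching)
    {x y : V} (hMxy : M.Adj x y) (hNxy : N.Adj x y) (z : V) : z = x ∨ z = y := by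
  have closed : ∀ {H : G.Subgraph}, H.IsMatching → H.Adj x y →
      ∀ a b, H.Adj a b → a ∈ ({x, y} : Set V) → b ∈ ({x, y} : Set V) := by
    rintro H hH hxy a b hab (rfl | rfl)
    · exact Or.inr (hH.eq_of_adj_left hab hxy)
    · exact Or.inl (hH.eq_of_adj_left hab hxy.symm)
  exact hc.mem_of_adj_closed hE (closed hM hMxy) (closed hN hNxy) (Set.mem_insert x _) z

end SimpleGraph

theorem ZMod.even_val_add_one_iff {p : ℕ} [NeZero p] (hp : Even p) (j : ZMod p) :
    Even (j + 1).val ↔ Odd j.val := by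
  have hp1 : p ≠ 1 := by rintro rfl; exact Nat.not_even_one hp
  rw [ZMod.val_add, ZMod.val_one'' hp1, Nat.even_iff, Nat.mod_mod_of_dvd _ hp.two_dvd,
    Nat.odd_iff]
  omega

theorem ZMod.odd_val_add_one_iff {p : ℕ} [NeZero p] (hp : Even p) (j : ZMod p) :
    Odd (j + 1).val ↔ Even j.val := by
  rw [← Nat.not_even_iff_odd, ZMod.even_val_add_one_iff hp, Nat.not_odd_iff_even]

theorem ZMod.odd_val_sub_one_iff {p : ℕ} [NeZero p] (hp : Even p) (j : ZMod p) :
    Odd (j - 1).val ↔ Even j.val := by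
  rw [← ZMod.even_val_add_one_iff hp, sub_add_cancel]

theorem ExtendsToHamCycle.finite {V : Type*} [DecidableEq V] {G : SimpleGraph V}
    {M : G.Subgraph} (h : ExtendsToHamCycle G M) : Finite V :=
  let ⟨_, _, _, _, hc, _⟩ := h
  hc.finite

section Grid

variable {p q : ℕ} {top sub : Fin q}

theorem boxProd_cycGraph_pathGraph_adj_top (htop : (top : ℕ) + 1 = q)
    (hsub : (sub : ℕ) + 1 = top) {j : ZMod p} {b : ZMod p × Fin q}
    (h : (cycGraph p □ pathGraph q).Adj (j, top) b) :
    b = (j - 1, top) ∨ b = (j + 1, top) ∨ b = (j, sub) := by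
  obtain ⟨k, r⟩ := b
  rcases h with ⟨⟨-, (hk : j = k + 1) | (hk : k = j + 1)⟩, rfl : top = r⟩ | ⟨hr, rfl : j = k⟩
  · exact Or.inl (by rw [hk, add_sub_cancel_right])
  · exact Or.inr (Or.inl (by rw [hk]))
  · rw [pathGraph_adj] at hr
    exact Or.inr (Or.inr (Prod.ext rfl (Fin.ext (by simp only at hr ⊢; omega))))

/-- The `N`-partner of `(k, top)` is neither `(j, top)`, taken by `(j, sub)`, nor `(l, top)`. -/
theorem SimpleGraph.Subgraph.IsPerfectMatching.adj_rung_of_adj_rung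
    {N : (cycGraph p □ pathGraph q).Subgraph} (hN : N.IsPerfectMatching)
    (htop : (top : ℕ) + 1 = q) (hsub : (sub : ℕ) + 1 = top) {j k l : ZMod p}
    (hj : N.Adj (j, top) (j, sub)) (hl : ¬N.Adj (k, top) (l, top))
    (hjl : (j = k - 1 ∧ l = k + 1) ∨ (j = k + 1 ∧ l = k - 1)) :
    N.Adj (k, top) (k, sub) := by
  obtain ⟨y, hy, -⟩ := hN.1 (hN.2 (k, top))
  have hj' : ¬N.Adj (k, top) (j, top) := fun h => by
    have := hN.1.eq_of_adj_left h.symm hj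
    simp only [Prod.mk.injEq] at this
    omega
  rcases boxProd_cycGraph_pathGraph_adj_top htop hsub (N.adj_sub hy) with rfl | rfl | rfl
  · rcases hjl with ⟨rfl, -⟩ | ⟨-, rfl⟩ <;> contradiction
  · rcases hjl with ⟨-, rfl⟩ | ⟨rfl, -⟩ <;> contradiction
  · exact hy

def topRowWithRungs (N : (cycGraph p □ pathGraph q).Subgraph) (top sub : Fin q) :
    Set (ZMod p × Fin q) :=
  {x | x.2 = top ∨ (x.2 = sub ∧ N.Adj (x.1, top) (x.1, sub))}

theorem topRowWithRungs_closed_of_isMatching {N : (cycGraph p □ pathGraph q).Subgraph}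
    (hN : N.IsMatching) (htop : (top : ℕ) + 1 = q) (hsub : (sub : ℕ) + 1 = top)
    (a b : ZMod p × Fin q) (hab : N.Adj a b) (ha : a ∈ topRowWithRungs N top sub) :
    b ∈ topRowWithRungs N top sub := by
  obtain ⟨j, r⟩ := a
  rcases ha with rfl | ⟨rfl, hrung⟩
  · rcases boxProd_cycGraph_pathGraph_adj_top htop hsub (N.adj_sub hab) with rfl | rfl | rfl
    · exact Or.inl rfl
    · exact Or.inl rfl
    · exact Or.inr ⟨rfl, hab⟩
  · exact Or.inl (by rw [hN.eq_of_adj_left hab hrung.symm])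

variable [NeZero p]

/-- The "staircase": `M` pairs the columns `2i, 2i + 1` in the top row and `2i + 1, 2i + 2` in
the row below. -/
theorem topRowWithRungs_closed_of_staircase {M N : (cycGraph p □ pathGraph q).Subgraph}
    (hp : Even p) (hM : M.IsMatching) (hN : N.IsPerfectMatching)
    (htop : (top : ℕ) + 1 = q) (hsub : (sub : ℕ) + 1 = top)
    (hMtop : ∀ j : ZMod p, Odd j.val → M.Adj (j - 1, top) (j, top))
    (hMsub : ∀ j : ZMod p, Odd j.val → M.Adj (j, sub) (j + 1, sub))
    (hdisj : ∀ j k : ZMod p, M.Adj (j, top) (k, top) → ¬N.Adj (j, top) (k, top))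
    (a b : ZMod p × Fin q) (hab : M.Adj a b) (ha : a ∈ topRowWithRungs N top sub) :
    b ∈ topRowWithRungs N top sub := by
  obtain ⟨j, r⟩ := a
  rcases ha with rfl | ⟨rfl, hrung⟩ <;> rcases Nat.even_or_odd j.val with hj | hj
  · have hnext := hMtop (j + 1) ((ZMod.odd_val_add_one_iff hp j).mpr hj)
    rw [add_sub_cancel_right] at hnext
    exact Or.inl (by rw [hM.eq_of_adj_left hab hnext])
  · exact Or.inl (by rw [hM.eq_of_adj_left hab (hMtop j hj).symm])
  · have hodd := (ZMod.odd_val_sub_one_iff hp j).mpr hj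
    have hprev := (hMsub (j - 1) hodd).symm
    rw [sub_add_cancel] at hprev
    rw [hM.eq_of_adj_left hab hprev]
    exact Or.inr ⟨rfl, hN.adj_rung_of_adj_rung htop hsub hrung
      (hdisj _ _ (hMtop (j - 1) hodd).symm) (Or.inr ⟨(sub_add_cancel j 1).symm, rfl⟩)⟩
  · have hnext := hMtop (j + 1 + 1)
      ((ZMod.odd_val_add_one_iff hp _).mpr ((ZMod.even_val_add_one_iff hp j).mpr hj))
    rw [add_sub_cancel_right] at hnext
    rw [hM.eq_of_adj_left hab (hMsub j hj)]
    exact Or.inr ⟨rfl, hN.adj_rung_of_adj_rung htop hsub hrung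
      (hdisj _ _ hnext) (Or.inl ⟨(add_sub_cancel_right j 1).symm, rfl⟩)⟩

theorem not_extendsToHamCycle_of_staircase {M : (cycGraph p □ pathGraph q).Subgraph}
    (hp : Even p) (htop : (top : ℕ) + 1 = q) (hsub : (sub : ℕ) + 1 = top)
    (hsub0 : (sub : ℕ) ≠ 0) (hM : M.IsMatching)
    (hMtop : ∀ j : ZMod p, Odd j.val → M.Adj (j - 1, top) (j, top))
    (hMsub : ∀ j : ZMod p, Odd j.val → M.Adj (j, sub) (j + 1, sub)) :
    ¬ExtendsToHamCycle (cycGraph p □ pathGraph q) M := by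
  rintro ⟨N, hN, _, c, hc, hE⟩
  have hdisj : ∀ j k : ZMod p, M.Adj (j, top) (k, top) → ¬N.Adj (j, top) (k, top) :=
    fun j k hMjk hNjk => by
      rcases hc.eq_or_eq_of_adj_of_adj hE hM hN.1 hMjk hNjk (j, sub) with h | h <;>
      · simp only [Prod.mk.injEq] at h
        omega
  have hbottom : ((0, ⟨0, by omega⟩) : ZMod p × Fin q) ∈ topRowWithRungs N top sub :=
    hc.mem_of_adj_closed hE
      (topRowWithRungs_closed_of_staircase hp hM hN htop hsub hMtop hMsub hdisj)
      (topRowWithRungs_closed_of_isMatching hN.1 htop hsub) (a := (0, top)) (Or.inl rfl) _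
  rcases hbottom with h | ⟨h, -⟩ <;>
  · simp only [Fin.ext_iff] at h
    omega

end Grid

/-- For even `p ≥ 4` and `q ≥ 3`, any perfect matching of `C_p □ P_q` containing the
edges `(i, q-1)(i+1, q-1)` and `(i-1, q)(i, q)` for every odd `i ∈ [p]` (columns of the
path labelled `1, …, q`) cannot be extended to a Hamiltonian cycle. -/
theorem stmt_7 (p q : ℕ) (hp : Even p) (hq : 3 ≤ q)
    (M : (cycGraph p □ SimpleGraph.pathGraph q).Subgraph)
    (hM : M.IsPerfectMatching)
    (hrow1 : ∀ i : ℕ, Odd i → i ≤ p →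
      s(((i : ZMod p), (⟨q - 2, by omega⟩ : Fin q)),
        ((i + 1 : ℕ), (⟨q - 2, by omega⟩ : Fin q))) ∈ M.edgeSet)
    (hrow2 : ∀ i : ℕ, Odd i → i ≤ p →
      s((((i : ZMod p) - 1), (⟨q - 1, by omega⟩ : Fin q)),
        ((i : ZMod p), (⟨q - 1, by omega⟩ : Fin q))) ∈ M.edgeSet) :
    ¬ ExtendsToHamCycle (cycGraph p □ SimpleGraph.pathGraph q) M := by
  intro hext
  -- `ZMod 0 = ℤ`, so `p = 0` is excluded by the finiteness of a Hamiltonian graph.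
  have : Finite (ZMod p × Fin q) := hext.finite
  have : Finite (ZMod p) :=
    Finite.of_injective (fun j : ZMod p => (j, (⟨0, by omega⟩ : Fin q))) fun _ _ h =>
      congrArg Prod.fst h
  have : NeZero p := ⟨by rintro rfl; exact not_finite (ZMod 0)⟩
  refine not_extendsToHamCycle_of_staircase hp (top := ⟨q - 1, by omega⟩)
    (sub := ⟨q - 2, by omega⟩) (by dsimp only; omega) (by dsimp only; omega)
    (by dsimp only; omega) hM.1 (fun j hj => ?_) (fun j hj => ?_) hext
  · simpa using hrow2 j.val hj (ZMod.val_lt j).le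
  · simpa using hrow1 j.val hj (ZMod.val_lt j).le
end

section
/- For every even p ≥ 6, the graph C_p □ C_3 does not have the PMH-property. -/
open SimpleGraph

/-!
Let `M` pair columns `2k, 2k + 1` in rows 0 and 1 and columns `2k + 1, 2k + 2` in row 2, using
horizontal edges only, and suppose `M ∪ N` is a Hamiltonian cycle `H`. `H` crosses the boundary of
a column an even number of times, so the number of `H`-edges between columns `g` and `g + 1` has
the same parity for every `g`; `M` already supplies two of these three edges when `g` is even and
one when `g` is odd.

If that parity is odd, all three edges of every even gap lie on `H`, so row 2 is a cycle inside
`H`. If it is even, every gap carries exactly two `H`-edges. Then `N` matches each `(i, 2)`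
vertically, and both ends of a row-2 edge of `M` are matched into the same row, so the vertices
lying in row 0 or `N`-matched into row 0 are closed under `H`, yet miss row 1.
-/

theorem List.countP_or_of_disjoint {α : Type*} {P Q : α → Prop} [DecidablePred P]
    [DecidablePred Q] (l : List α) (h : ∀ a ∈ l, ¬(P a ∧ Q a)) :
    l.countP (fun a => P a ∨ Q a) = l.countP (P ·) + l.countP (Q ·) := by
  induction l with
  | nil => rfl
  | cons a l ih =>
    simp only [List.countP_cons, ih fun b hb => h b (List.mem_cons_of_mem a hb)]
    have := h a List.mem_cons_self
    split_ifs <;> simp_all <;> omega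

theorem List.Nodup.countP_exists_eq {α ι : Type*} [Fintype ι] [DecidableEq α] {l : List α}
    (hl : l.Nodup) {f : ι → α} (hf : f.Injective) :
    l.countP (fun a => ∃ i, a = f i) = (Finset.univ.filter fun i => f i ∈ l).card := by
  rw [List.countP_eq_length_filter, ← List.toFinset_card_of_nodup (hl.filter _),
    ← Finset.card_map ⟨f, hf⟩]
  congr 1
  ext a
  simp only [List.mem_toFinset, List.mem_filter, decide_eq_true_eq, Finset.mem_map,
    Finset.mem_filter, Finset.mem_univ, true_and, Function.Embedding.coeFn_mk]
  constructor
  · rintro ⟨ha, i, rfl⟩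
    exact ⟨i, ha, rfl⟩
  · rintro ⟨i, hi, rfl⟩
    exact ⟨hi, i, rfl⟩

section Ring

variable {R : Type*} [Ring R] {a : R}

theorem add_one_add_one_ne_self_of_two_ne_zero (h2 : (2 : R) ≠ 0) : a + 1 + 1 ≠ a := by
  rwa [add_assoc, one_add_one_eq_two, Ne, add_eq_left]

theorem add_one_ne_self_of_two_ne_zero (h2 : (2 : R) ≠ 0) : a + 1 ≠ a := by
  rw [Ne, add_eq_left]
  rintro h
  exact h2 (by rw [← one_add_one_eq_two, h, add_zero])

theorem add_one_ne_sub_one_of_two_ne_zero (h2 : (2 : R) ≠ 0) : a + 1 ≠ a - 1 := by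
  intro h
  apply add_one_add_one_ne_self_of_two_ne_zero h2 (a := a - 1)
  rw [sub_add_cancel, h]

end Ring

namespace SimpleGraph

variable {V : Type*} {G : SimpleGraph V}

namespace Walk

theorem even_countP_edges_iff {S : Set V} {P : Sym2 V → Prop} [DecidablePred P]
    (hP : ∀ x y, G.Adj x y → (P s(x, y) ↔ ¬(x ∈ S ↔ y ∈ S))) {u v : V} (w : G.Walk u v) :
    Even (w.edges.countP (P ·)) ↔ (u ∈ S ↔ v ∈ S) := by
  induction w with
  | nil => simp
  | cons h w ih =>
    rw [edges_cons, List.countP_cons]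
    have := hP _ _ h
    split_ifs <;> simp_all [Nat.even_add_one]
    tauto

theorem exists_boundary_edge [DecidableEq V] {S : Set V} {u x y : V} (c : G.Walk u u)
    (hx : x ∈ c.support) (hy : y ∈ c.support) (hxS : x ∈ S) (hyS : y ∉ S) :
    ∃ a b, s(a, b) ∈ c.edges ∧ a ∈ S ∧ b ∉ S := by
  by_cases hu : u ∈ S
  · obtain ⟨d, hd, hdS⟩ := (c.takeUntil y hy).exists_boundary_dart S hu hyS
    exact ⟨d.fst, d.snd, c.edges_takeUntil_subset_edges hy (List.mem_map_of_mem hd), hdS⟩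
  · obtain ⟨d, hd, hdS⟩ := (c.dropUntil x hx).exists_boundary_dart S hxS hu
    exact ⟨d.fst, d.snd, c.edges_dropUntil_subset_edges hx (List.mem_map_of_mem hd), hdS⟩

theorem IsCycle.exists_mem_edges_iff {u x : V} {c : G.Walk u u} (hc : c.IsCycle)
    (hx : x ∈ c.support) : ∃ a b, a ≠ b ∧ ∀ w, s(x, w) ∈ c.edges ↔ w = a ∨ w = b := by
  obtain ⟨a, b, hab, hset⟩ := Set.ncard_eq_two.1 (hc.ncard_neighborSet_toSubgraph_eq_two hx)
  refine ⟨a, b, hab, fun w => ?_⟩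
  rw [← adj_toSubgraph_iff_mem_edges, ← Subgraph.mem_neighborSet, hset]
  rfl

end Walk

def Subgraph.ofInvolutive (σ : V → V) (hσ : Function.Involutive σ) (hG : ∀ v, G.Adj v (σ v)) :
    G.Subgraph where
  verts := Set.univ
  Adj v w := w = σ v
  adj_sub := by rintro v _ rfl; exact hG v
  edge_vert _ := Set.mem_univ _
  symm := ⟨fun v w h => by rw [h, hσ v]⟩

theorem Subgraph.isPerfectMatching_ofInvolutive (σ : V → V) (hσ : Function.Involutive σ)
    (hG : ∀ v, G.Adj v (σ v)) : (Subgraph.ofInvolutive σ hσ hG).IsPerfectMatching :=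
  Subgraph.isPerfectMatching_iff.2 fun v => ⟨σ v, rfl, fun _ h => h⟩

structure IsAlternatingHamCycle [DecidableEq V] {u : V} (c : G.Walk u u) (M N : G.Subgraph) :
    Prop where
  isHamiltonianCycle : c.IsHamiltonianCycle
  isPerfectMatching_left : M.IsPerfectMatching
  isPerfectMatching_right : N.IsPerfectMatching
  walkEdgeSet_eq : walkEdgeSet c = M.edgeSet ∪ N.edgeSet

namespace IsAlternatingHamCycle

variable [DecidableEq V] {u x y z w : V} {c : G.Walk u u} {M N : G.Subgraph}

theorem mem_edges_iff (h : IsAlternatingHamCycle c M N) :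
    s(x, y) ∈ c.edges ↔ M.Adj x y ∨ N.Adj x y := by
  have := congrArg (s(x, y) ∈ ·) h.walkEdgeSet_eq
  simpa [walkEdgeSet] using this

theorem eq_or_eq_of_mem_edges (h : IsAlternatingHamCycle c M N) (hm : M.Adj x y)
    (hn : N.Adj x z) (hw : s(x, w) ∈ c.edges) : w = y ∨ w = z :=
  (h.mem_edges_iff.1 hw).imp (h.isPerfectMatching_left.1.eq_of_adj_left · hm)
    (h.isPerfectMatching_right.1.eq_of_adj_left · hn)

theorem not_adj_right_of_adj_left (h : IsAlternatingHamCycle c M N) (hm : M.Adj x y) :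
    ¬N.Adj x y := by
  intro hn
  obtain ⟨a, b, hab, hnbr⟩ :=
    h.isHamiltonianCycle.isCycle.exists_mem_edges_iff (h.isHamiltonianCycle.mem_support x)
  have ha := h.eq_or_eq_of_mem_edges hm hn ((hnbr a).2 (.inl rfl))
  have hb := h.eq_or_eq_of_mem_edges hm hn ((hnbr b).2 (.inr rfl))
  exact hab (by rw [ha.elim id id, hb.elim id id])

theorem adj_right_of_mem_edges (h : IsAlternatingHamCycle c M N) (hm : M.Adj x y)
    (hw : s(x, w) ∈ c.edges) (hne : w ≠ y) : N.Adj x w :=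
  (h.mem_edges_iff.1 hw).resolve_left fun hm' =>
    hne (h.isPerfectMatching_left.1.eq_of_adj_left hm' hm)

end IsAlternatingHamCycle

end SimpleGraph

open Finset

section Gaps

variable {p : ℕ}

def gapEdge (g : ZMod p) (j : ZMod 3) : Sym2 (ZMod p × ZMod 3) := s((g, j), (g + 1, j))

theorem gapEdge_eq_gapEdge_iff (h2 : (2 : ZMod p) ≠ 0) {g g' : ZMod p} {j j' : ZMod 3} :
    gapEdge g j = gapEdge g' j' ↔ g = g' ∧ j = j' := by
  constructor
  · intro h
    rcases Sym2.eq_iff.1 h with ⟨h1, -⟩ | ⟨h1, h2'⟩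
    · exact Prod.ext_iff.1 h1
    · simp only [Prod.ext_iff] at h1 h2'
      exact absurd (by rw [← h1.1, h2'.1]) (add_one_add_one_ne_self_of_two_ne_zero h2 (a := g'))
  · rintro ⟨rfl, rfl⟩
    rfl

theorem gapEdge_injective (g : ZMod p) : (gapEdge g).Injective := fun j j' h => by
  rcases Sym2.eq_iff.1 h with ⟨h1, -⟩ | ⟨h1, -⟩ <;> exact (Prod.ext_iff.1 h1).2

theorem gapEdge_ne_of_fst_eq (h2 : (2 : ZMod p) ≠ 0) {g : ZMod p} {j : ZMod 3}
    {x y : ZMod p × ZMod 3} (hxy : x.1 = y.1) : gapEdge g j ≠ s(x, y) := by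
  intro h
  rcases Sym2.eq_iff.1 h with ⟨rfl, rfl⟩ | ⟨rfl, rfl⟩
  · exact add_one_ne_self_of_two_ne_zero h2 hxy.symm
  · exact add_one_ne_self_of_two_ne_zero h2 hxy

theorem boxProd_cycGraph_adj_cases {x y : ZMod p × ZMod 3} (h : (cycGraph p □ cycGraph 3).Adj x y) :
    (∃ g, s(x, y) = gapEdge g x.2) ∨ x.1 = y.1 := by
  obtain ⟨x1, x2⟩ := x
  obtain ⟨y1, y2⟩ := y
  rcases boxProd_adj.1 h with ⟨⟨-, rfl | rfl⟩, rfl : x2 = y2⟩ | ⟨-, hcol⟩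
  · exact .inl ⟨y1, Sym2.eq_swap⟩
  · exact .inl ⟨x1, rfl⟩
  · exact .inr hcol

variable {v : ZMod p × ZMod 3} {c : (cycGraph p □ cycGraph 3).Walk v v}

def gapRows (c : (cycGraph p □ cycGraph 3).Walk v v) (g : ZMod p) : Finset (ZMod 3) :=
  {j | gapEdge g j ∈ c.edges}

@[simp]
theorem mem_gapRows {g : ZMod p} {j : ZMod 3} : j ∈ gapRows c g ↔ gapEdge g j ∈ c.edges := by
  simp [gapRows]

theorem even_card_gapRows_add (h2 : (2 : ZMod p) ≠ 0) (hc : c.IsTrail) (g : ZMod p) :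
    Even (#(gapRows c g) + #(gapRows c (g + 1))) := by
  have hg : g + 1 ≠ g := add_one_ne_self_of_two_ne_zero h2
  -- The edges leaving column `g + 1` are exactly the horizontal ones in gaps `g` and `g + 1`.
  have hP : ∀ x y, (cycGraph p □ cycGraph 3).Adj x y →
      (((∃ j, s(x, y) = gapEdge g j) ∨ ∃ j, s(x, y) = gapEdge (g + 1) j) ↔
        ¬(x ∈ {z | z.1 = g + 1} ↔ y ∈ {z | z.1 = g + 1})) := by
    rintro ⟨x1, x2⟩ ⟨y1, y2⟩ hxy
    rcases boxProd_cycGraph_adj_cases hxy with ⟨i, hi⟩ | hcol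
    · simp only [hi, gapEdge_eq_gapEdge_iff h2, exists_and_left, exists_eq', and_true,
        Set.mem_ofPred_eq]
      rcases Sym2.eq_iff.1 hi with ⟨h1, h2⟩ | ⟨h1, h2⟩ <;>
        simp only [Prod.ext_iff] at h1 h2 <;> rw [h1.1, h2.1] <;> grind
    · have hne : ∀ g j, s((x1, x2), (y1, y2)) ≠ gapEdge g j :=
        fun g j => (gapEdge_ne_of_fst_eq h2 hcol).symm
      simp_all
  have hcross := (c.even_countP_edges_iff
    (P := fun e => (∃ j, e = gapEdge g j) ∨ ∃ j, e = gapEdge (g + 1) j) hP).2 Iff.rfl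
  rwa [List.countP_or_of_disjoint, hc.edges_nodup.countP_exists_eq (gapEdge_injective g),
    hc.edges_nodup.countP_exists_eq (gapEdge_injective (g + 1))] at hcross
  rintro e - ⟨⟨j, rfl⟩, ⟨j', he⟩⟩
  exact hg ((gapEdge_eq_gapEdge_iff h2).1 he).1.symm

theorem even_card_gapRows_iff [NeZero p] (h2 : (2 : ZMod p) ≠ 0) (hc : c.IsTrail)
    (g : ZMod p) : Even #(gapRows c g) ↔ Even #(gapRows c 0) := by
  rw [← ZMod.natCast_zmod_val g]
  induction g.val with
  | zero => rw [Nat.cast_zero]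
  | succ n ih =>
    rw [Nat.cast_succ, ← ih, ← Nat.even_add, add_comm]
    exact even_card_gapRows_add h2 hc _

theorem not_forall_gapEdge_two_mem (h2 : (2 : ZMod p) ≠ 0)
    (hc : c.IsHamiltonianCycle) : ¬∀ g, gapEdge g 2 ∈ c.edges := by
  intro hrow
  obtain ⟨⟨i, j⟩, b, hb, rfl : j = 2, hb2 : b.2 ≠ 2⟩ :=
    c.exists_boundary_edge (S := {x : ZMod p × ZMod 3 | x.2 = 2})
      (hc.mem_support (0, 2)) (hc.mem_support (0, 0)) rfl (by decide : (0 : ZMod 3) ≠ 2)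
  obtain ⟨a₁, a₂, -, hnbr⟩ := hc.isCycle.exists_mem_edges_iff (hc.mem_support (i, 2))
  have hright := (hnbr (i + 1, 2)).1 (hrow i)
  have hleft := (hnbr (i - 1, 2)).1 (by simpa [gapEdge, Sym2.eq_swap] using hrow (i - 1))
  have hdown := (hnbr b).1 hb
  have hne : ((i + 1, 2) : ZMod p × ZMod 3) ≠ (i - 1, 2) := fun h =>
    add_one_ne_sub_one_of_two_ne_zero h2 (Prod.ext_iff.1 h).1
  have hbr : b ≠ (i + 1, 2) := fun h => hb2 (by rw [h])
  have hbl : b ≠ (i - 1, 2) := fun h => hb2 (by rw [h])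
  grind

end Gaps

section BadMatching

variable {p : ℕ} (hp : 2 ∣ p)

def colParity : ZMod p →+* ZMod 2 := ZMod.castHom hp (ZMod 2)

def rowShift (j : ZMod 3) : ZMod 2 := if j = 2 then 1 else 0

theorem rowShift_two : rowShift 2 = 1 := rfl

theorem rowShift_of_ne_two {j : ZMod 3} (hj : j ≠ 2) : rowShift j = 0 := if_neg hj

def badPartner (x : ZMod p × ZMod 3) : ZMod p × ZMod 3 :=
  if colParity hp x.1 = rowShift x.2 then (x.1 + 1, x.2) else (x.1 - 1, x.2)

theorem badPartner_snd (x : ZMod p × ZMod 3) : (badPartner hp x).2 = x.2 := by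
  unfold badPartner
  split_ifs <;> rfl

theorem badPartner_involutive : Function.Involutive (badPartner hp) := by
  have hflip : ∀ a b : ZMod 2, a ≠ b → a - 1 = b := by decide
  rintro ⟨i, j⟩
  by_cases h : colParity hp i = rowShift j
  · simp [badPartner, h]
  · have h' : colParity hp (i - 1) = rowShift j := by rw [map_sub, map_one, hflip _ _ h]
    simp [badPartner, h, h']

theorem adj_badPartner (x : ZMod p × ZMod 3) :
    (cycGraph p □ cycGraph 3).Adj x (badPartner hp x) := by
  have h1 : (1 : ZMod p) ≠ 0 := fun h =>
    absurd (hp.trans ((ZMod.natCast_eq_zero_iff 1 p).1 (by simpa using h))) (by decide)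
  unfold badPartner
  split_ifs
  · exact boxProd_adj.2 (.inl ⟨⟨fun h => h1 (add_eq_left.1 h.symm), .inr rfl⟩, rfl⟩)
  · exact boxProd_adj.2
      (.inl ⟨⟨fun h => h1 (sub_eq_self.1 h.symm), .inl (sub_add_cancel _ _).symm⟩, rfl⟩)

def badMatching : (cycGraph p □ cycGraph 3).Subgraph :=
  Subgraph.ofInvolutive (badPartner hp) (badPartner_involutive hp) (adj_badPartner hp)

theorem isPerfectMatching_badMatching : (badMatching hp).IsPerfectMatching :=
  Subgraph.isPerfectMatching_ofInvolutive _ _ _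

variable {hp}

theorem badMatching_adj_add_one {g : ZMod p} {j : ZMod 3} (h : colParity hp g = rowShift j) :
    (badMatching hp).Adj (g, j) (g + 1, j) := by
  simp [badMatching, Subgraph.ofInvolutive, badPartner, h]

theorem badMatching_adj_sub_one {g : ZMod p} {j : ZMod 3} (h : colParity hp g ≠ rowShift j) :
    (badMatching hp).Adj (g, j) (g - 1, j) := by
  simp [badMatching, Subgraph.ofInvolutive, badPartner, h]

end BadMatching

section NotExtends

variable {p : ℕ} {hp : 2 ∣ p} {v : ZMod p × ZMod 3} {c : (cycGraph p □ cycGraph 3).Walk v v}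
  {N : (cycGraph p □ cycGraph 3).Subgraph}

theorem mem_gapRows_of_colParity_eq (h : IsAlternatingHamCycle c (badMatching hp) N)
    {g : ZMod p} {j : ZMod 3} (hg : colParity hp g = rowShift j) : j ∈ gapRows c g :=
  mem_gapRows.2 (h.mem_edges_iff.2 (.inl (badMatching_adj_add_one hg)))

theorem gapEdge_two_mem_of_odd (h : IsAlternatingHamCycle c (badMatching hp) N)
    (hodd : ∀ g, ¬Even #(gapRows c g)) (g : ZMod p) : gapEdge g 2 ∈ c.edges := by
  have key : ∀ s : Finset (ZMod 3), 0 ∈ s → 1 ∈ s → ¬Even #s → 2 ∈ s := by decide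
  suffices 2 ∈ gapRows c g from mem_gapRows.1 this
  rcases (by decide : ∀ a : ZMod 2, a = 0 ∨ a = 1) (colParity hp g) with hg | hg
  · exact key _ (mem_gapRows_of_colParity_eq h (by rw [hg, rowShift_of_ne_two (by decide)]))
      (mem_gapRows_of_colParity_eq h (by rw [hg, rowShift_of_ne_two (by decide)])) (hodd g)
  · exact mem_gapRows_of_colParity_eq h (by rw [hg, rowShift_two])

theorem two_not_mem_gapRows (h : IsAlternatingHamCycle c (badMatching hp) N)
    (heven : ∀ g, Even #(gapRows c g)) {g : ZMod p} (hg : colParity hp g = 0) :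
    2 ∉ gapRows c g := by
  have key : ∀ s : Finset (ZMod 3), 0 ∈ s → 1 ∈ s → Even #s → 2 ∉ s := by decide
  exact key _ (mem_gapRows_of_colParity_eq h (by rw [hg, rowShift_of_ne_two (by decide)]))
    (mem_gapRows_of_colParity_eq h (by rw [hg, rowShift_of_ne_two (by decide)])) (heven g)

theorem zero_or_one_mem_gapRows (h : IsAlternatingHamCycle c (badMatching hp) N)
    (heven : ∀ g, Even #(gapRows c g)) {g : ZMod p} (hg : colParity hp g = 1) :
    0 ∈ gapRows c g ∨ 1 ∈ gapRows c g := by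
  have key : ∀ s : Finset (ZMod 3), 2 ∈ s → Even #s → 0 ∈ s ∨ 1 ∈ s := by decide
  exact key _ (mem_gapRows_of_colParity_eq h (by rw [hg, rowShift_two])) (heven g)

theorem not_adj_right_gapEdge_two (h : IsAlternatingHamCycle c (badMatching hp) N)
    (heven : ∀ g, Even #(gapRows c g)) (g : ZMod p) : ¬N.Adj (g, 2) (g + 1, 2) := by
  intro hN
  rcases (by decide : ∀ a : ZMod 2, a = 0 ∨ a = 1) (colParity hp g) with hg | hg
  · exact two_not_mem_gapRows h heven hg
      (mem_gapRows.2 (h.mem_edges_iff.2 (.inr hN)))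
  · exact h.not_adj_right_of_adj_left (badMatching_adj_add_one (by rw [hg, rowShift_two])) hN

theorem adj_right_two_zero_or_one (h : IsAlternatingHamCycle c (badMatching hp) N)
    (heven : ∀ g, Even #(gapRows c g)) (i : ZMod p) :
    N.Adj (i, 2) (i, 0) ∨ N.Adj (i, 2) (i, 1) := by
  obtain ⟨y, hy⟩ := (h.isPerfectMatching_right.1 (h.isPerfectMatching_right.2 (i, 2))).exists
  rcases boxProd_cycGraph_adj_cases hy.adj_sub with ⟨g, hg⟩ | hcol
  · refine absurd ?_ (not_adj_right_gapEdge_two h heven g)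
    have hmem : s((i, 2), y) ∈ N.edgeSet := hy
    rwa [hg, gapEdge, N.mem_edgeSet] at hmem
  · obtain ⟨y1, y2⟩ := y
    obtain rfl : i = y1 := hcol
    have hy2 : y2 ≠ 2 := fun h => hy.ne (by rw [h])
    rcases (by decide : ∀ a : ZMod 3, a ≠ 2 → a = 0 ∨ a = 1) y2 hy2 with rfl | rfl
    exacts [.inl hy, .inr hy]

theorem not_adj_right_zero_one (h : IsAlternatingHamCycle c (badMatching hp) N)
    (heven : ∀ g, Even #(gapRows c g)) (i : ZMod p) : ¬N.Adj (i, 0) (i, 1) := by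
  intro h01
  have hN := h.isPerfectMatching_right.1
  rcases adj_right_two_zero_or_one h heven i with h20 | h21
  · exact absurd (Prod.ext_iff.1 (hN.eq_of_adj_right h01.symm h20)).2
      (by decide : (1 : ZMod 3) ≠ 2)
  · exact absurd (Prod.ext_iff.1 (hN.eq_of_adj_right h01 h21)).2 (by decide : (0 : ZMod 3) ≠ 2)

theorem not_adj_right_two_add_one (h2 : (2 : ZMod p) ≠ 0)
    (h : IsAlternatingHamCycle c (badMatching hp) N) {i : ZMod p} (hi : colParity hp i = 1)
    {r r' : ZMod 3} (hr : r ≠ 2) (hr' : r' ≠ 2) (hrow : r ∈ gapRows c i ∨ r' ∈ gapRows c i)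
    (hN : N.Adj (i, 2) (i, r)) : ¬N.Adj (i + 1, 2) (i + 1, r') := by
  -- `(i, r)` is used up by `M` and `N`, so the gap-`i` edge on `H` is in row `r'`, where it is
  -- the `N`-edge of `(i + 1, r')`.
  have hM : (badMatching hp).Adj (i, r) (i - 1, r) :=
    badMatching_adj_sub_one (by rw [hi, rowShift_of_ne_two hr]; decide)
  have hr_out : r ∉ gapRows c i := by
    intro hmem
    rcases h.eq_or_eq_of_mem_edges hM hN.symm (mem_gapRows.1 hmem) with h' | h'
    · exact add_one_ne_sub_one_of_two_ne_zero h2 (Prod.ext_iff.1 h').1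
    · exact hr (Prod.ext_iff.1 h').2
  have hedge : s((i + 1, r'), (i, r')) ∈ c.edges := by
    rw [Sym2.eq_swap]
    exact mem_gapRows.1 (hrow.resolve_left hr_out)
  have hM' : (badMatching hp).Adj (i + 1, r') (i + 1 + 1, r') :=
    badMatching_adj_add_one (by rw [map_add, hi, map_one, rowShift_of_ne_two hr']; decide)
  have hN' : N.Adj (i + 1, r') (i, r') := h.adj_right_of_mem_edges hM' hedge
    fun h' => add_one_add_one_ne_self_of_two_ne_zero h2 (Prod.ext_iff.1 h').1.symm
  intro hN2
  have := h.isPerfectMatching_right.1.eq_of_adj_left hN2.symm hN'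
  exact add_one_ne_self_of_two_ne_zero h2 (Prod.ext_iff.1 this).1

theorem adj_right_two_zero_iff (h2 : (2 : ZMod p) ≠ 0)
    (h : IsAlternatingHamCycle c (badMatching hp) N) (heven : ∀ g, Even #(gapRows c g))
    {i : ZMod p} (hi : colParity hp i = 1) :
    N.Adj (i, 2) (i, 0) ↔ N.Adj (i + 1, 2) (i + 1, 0) := by
  have hrow := zero_or_one_mem_gapRows h heven hi
  constructor
  · intro h0
    exact (adj_right_two_zero_or_one h heven (i + 1)).resolve_right
      (not_adj_right_two_add_one h2 h hi (by decide) (by decide) hrow h0)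
  · intro h0
    refine (adj_right_two_zero_or_one h heven i).resolve_right fun h1 => ?_
    exact not_adj_right_two_add_one h2 h hi (by decide) (by decide) hrow.symm h1 h0

def zeroSide (N : (cycGraph p □ cycGraph 3).Subgraph) : Set (ZMod p × ZMod 3) :=
  {x | x.2 = 0 ∨ N.Adj x (x.1, 0)}

theorem mem_zeroSide_of_mem_edges (h2 : (2 : ZMod p) ≠ 0)
    (h : IsAlternatingHamCycle c (badMatching hp) N) (heven : ∀ g, Even #(gapRows c g))
    {a b : ZMod p × ZMod 3} (hab : s(a, b) ∈ c.edges) (ha : a ∈ zeroSide N) :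
    b ∈ zeroSide N := by
  obtain ⟨i, j⟩ := a
  rcases h.mem_edges_iff.1 hab with hM | hN
  · obtain rfl : b = badPartner hp (i, j) := hM
    rcases (by decide : ∀ a : ZMod 3, a = 0 ∨ a = 1 ∨ a = 2) j with rfl | rfl | rfl
    · exact .inl (badPartner_snd hp _)
    · exact absurd (ha.resolve_left (by decide : (1 : ZMod 3) ≠ 0)).symm
        (not_adj_right_zero_one h heven i)
    · have ha : N.Adj (i, 2) (i, 0) := ha.resolve_left (by decide : (2 : ZMod 3) ≠ 0)
      right
      unfold badPartner
      split_ifs with hi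
      · exact (adj_right_two_zero_iff h2 h heven hi).1 ha
      · have hi' : colParity hp (i - 1) = 1 := by
          rcases (by decide : ∀ a : ZMod 2, a = 0 ∨ a = 1) (colParity hp i) with h0 | h1
          · rw [map_sub, h0, map_one]; rfl
          · exact absurd h1 hi
        exact (adj_right_two_zero_iff h2 h heven hi').2 (by rwa [sub_add_cancel])
  · rcases ha with rfl | ha
    · obtain ⟨b1, b2⟩ := b
      rcases boxProd_adj.1 hN.adj_sub with ⟨-, hrow⟩ | ⟨-, rfl : i = b1⟩
      · exact .inl hrow.symm
      · exact .inr hN.symm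
    · exact .inl (by rw [h.isPerfectMatching_right.1.eq_of_adj_left hN ha])

theorem not_forall_even_card_gapRows (h2 : (2 : ZMod p) ≠ 0)
    (h : IsAlternatingHamCycle c (badMatching hp) N) : ¬∀ g, Even #(gapRows c g) := by
  intro heven
  obtain ⟨a, b, hab, ha, hb⟩ := c.exists_boundary_edge (S := zeroSide N)
    (h.isHamiltonianCycle.mem_support (0, 0)) (h.isHamiltonianCycle.mem_support (0, 1))
    (.inl rfl)
    fun h01 => h01.elim (absurd · (by decide : (1 : ZMod 3) ≠ 0))
      (not_adj_right_zero_one h heven 0 ·.symm)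
  exact hb (mem_zeroSide_of_mem_edges h2 h heven hab ha)

theorem badMatching_not_extendsToHamCycle [NeZero p] (hp : 2 ∣ p) (h2 : (2 : ZMod p) ≠ 0) :
    ¬ExtendsToHamCycle (cycGraph p □ cycGraph 3) (badMatching hp) := by
  rintro ⟨N, hN, v, c, hc, hE⟩
  have h : IsAlternatingHamCycle c (badMatching hp) N :=
    ⟨hc, isPerfectMatching_badMatching hp, hN, hE⟩
  have hparity := even_card_gapRows_iff h2 hc.isCycle.isTrail
  by_cases h0 : Even #(gapRows c 0)
  · exact not_forall_even_card_gapRows h2 h fun g => (hparity g).2 h0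
  · exact not_forall_gapEdge_two_mem h2 hc
      (gapEdge_two_mem_of_odd h fun g => (hparity g).not.2 h0)

end NotExtends

/-- For every even `p ≥ 6`, the graph `C_p □ C_3` does not have the PMH-property. -/
theorem stmt_9 (p : ℕ) (hp : Even p) (hp6 : 6 ≤ p) :
    ¬ HasPMH (cycGraph p □ cycGraph 3) := by
  have : NeZero p := ⟨by omega⟩
  have h2 : (2 : ZMod p) ≠ 0 := fun h =>
    absurd (Nat.le_of_dvd two_pos ((ZMod.natCast_eq_zero_iff 2 p).1 (by simpa using h))) (by omega)
  exact fun hPMH => badMatching_not_extendsToHamCycle (even_iff_two_dvd.1 hp) h2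
    (hPMH.2 _ (isPerfectMatching_badMatching _))
end
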